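/- Let H ∈ ℝ^{2d×2d} be symmetric with block form [[A, B],[B^T, D]] (blocks d×d), let C = C_R + i C_I ∈ ℂ^{d×d} be symmetric with C_I positive definite, and let G be the associated symplectic covariance matrix with inverse G^{-1} = [[C_I^{-1}, C_I^{-1} C_R],[C_R C_I^{-1}, C_I + C_R C_I^{-1} C_R]]. Then tr(H G^{-1}) = tr((A + B C + C^* B^T + C^* D C) C_I^{-1}). -/
import Mathlib

open Matrix

lemma trace_fromBlocks' {d : ℕ} {R : Type*} [AddCommMonoid R]
    (A B C D : Matrix (Fin d) (Fin d) R) :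
    (Matrix.fromBlocks A B C D).trace = A.trace + D.trace := by
  simp [Matrix.trace, Fintype.sum_sum_type, Matrix.fromBlocks]

lemma map_mul' {d : ℕ} (M N : Matrix (Fin d) (Fin d) ℝ) :
    (M * N).map Complex.ofReal = M.map Complex.ofReal * N.map Complex.ofReal := by
  ext i j; simp [Matrix.mul_apply, Matrix.map_apply]

lemma map_add' {d : ℕ} (M N : Matrix (Fin d) (Fin d) ℝ) :
    (M + N).map Complex.ofReal = M.map Complex.ofReal + N.map Complex.ofReal := by
  ext i j; simp [Matrix.map_apply, Matrix.add_apply]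

lemma trace_map' {d : ℕ} (M : Matrix (Fin d) (Fin d) ℝ) :
    ((M.trace : ℝ) : ℂ) = (M.map Complex.ofReal).trace := by
  simp [Matrix.trace, Matrix.diag, Matrix.map]

theorem stmt6 (d : ℕ) (A B D : Matrix (Fin d) (Fin d) ℝ)
    (hA : Aᵀ = A) (hD : Dᵀ = D)
    (C : Matrix (Fin d) (Fin d) ℂ) (hC : Cᵀ = C)
    (CR CI : Matrix (Fin d) (Fin d) ℝ)
    (hCR : ∀ i j, CR i j = (C i j).re) (hCI : ∀ i j, CI i j = (C i j).im)
    (hpd : CI.PosDef) :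
    let H : Matrix (Fin d ⊕ Fin d) (Fin d ⊕ Fin d) ℝ := Matrix.fromBlocks A B Bᵀ D
    let Ginv : Matrix (Fin d ⊕ Fin d) (Fin d ⊕ Fin d) ℝ :=
      Matrix.fromBlocks CI⁻¹ (CI⁻¹ * CR) (CR * CI⁻¹) (CI + CR * CI⁻¹ * CR)
    ((H * Ginv).trace : ℂ) =
      ((A.map Complex.ofReal + B.map Complex.ofReal * C + Cᴴ * (Bᵀ).map Complex.ofReal
        + Cᴴ * D.map Complex.ofReal * C) * (CI⁻¹).map Complex.ofReal).trace := by
  intro H Ginv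
  classical
  have hsym : ∀ i j, C i j = C j i := fun i j => congrFun (congrFun hC j) i
  -- complex block matrices
  set A' := A.map Complex.ofReal with hA'
  set B' := B.map Complex.ofReal with hB'
  set D' := D.map Complex.ofReal with hD'
  set CR' := CR.map Complex.ofReal with hCR'
  set CI' := CI.map Complex.ofReal with hCI'
  set J' := (CI⁻¹).map Complex.ofReal with hJ'
  have hBt : (Bᵀ).map Complex.ofReal = B'ᵀ := by ext i j; simp [hB', Matrix.map_apply]
  have hCeq : C = CR' + Complex.I • CI' := by
    ext i j
    have h : (CR' + Complex.I • CI') i j = (↑(CR i j) + Complex.I * ↑(CI i j)) := by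
      simp [hCR', hCI', Matrix.map_apply, Matrix.add_apply, Matrix.smul_apply]
    rw [h, hCR, hCI, mul_comm]
    exact (Complex.re_add_im _).symm
  have hCH : Cᴴ = CR' - Complex.I • CI' := by
    ext i j
    have h : (CR' - Complex.I • CI') i j = (↑(CR i j) - Complex.I * ↑(CI i j)) := by
      simp [hCR', hCI', Matrix.map_apply, Matrix.sub_apply, Matrix.smul_apply]
    rw [h, hCR, hCI, Matrix.conjTranspose_apply, ← hsym i j, mul_comm]
    exact Complex.ext (by simp) (by simp)
  have hu : IsUnit CI.det := isUnit_iff_ne_zero.2 hpd.det_pos.ne'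
  have h1 : CI' * J' = 1 := by
    rw [hCI', hJ', ← map_mul', Matrix.mul_nonsing_inv CI hu]
    ext i j; simp [Matrix.map_apply, Matrix.one_apply]; split <;> simp
  have h2 : J' * CI' = 1 := by
    rw [hCI', hJ', ← map_mul', Matrix.nonsing_inv_mul CI hu]
    ext i j; simp [Matrix.map_apply, Matrix.one_apply]; split <;> simp
  -- LHS
  have hL : ((H * Ginv).trace : ℂ) =
      (A' * J').trace + (B' * (CR' * J')).trace
      + (B'ᵀ * (J' * CR')).trace + (D' * CI').trace + (D' * (CR' * (J' * CR'))).trace := by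
    show (((Matrix.fromBlocks A B Bᵀ D) *
      (Matrix.fromBlocks CI⁻¹ (CI⁻¹ * CR) (CR * CI⁻¹) (CI + CR * CI⁻¹ * CR))).trace : ℂ) = _
    rw [Matrix.fromBlocks_multiply, trace_fromBlocks']
    push_cast [trace_map']
    simp only [map_add', map_mul', Matrix.mul_add, Matrix.trace_add, hBt, ← hA', ← hB', ← hD',
      ← hCR', ← hCI', ← hJ', Matrix.mul_assoc]
    ring
  rw [hL]
  -- RHS
  rw [hCH, hCeq, hBt]
  simp only [Matrix.add_mul, Matrix.mul_add, Matrix.sub_mul, Matrix.mul_sub,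
    Matrix.smul_mul, Matrix.mul_smul, Matrix.trace_add, Matrix.trace_sub,
    Matrix.trace_smul, Matrix.mul_assoc]
  -- now rearrange with trace_mul_comm and h1 h2
  have tB : (B' * (CI' * J')).trace = B'.trace := by rw [h1, Matrix.mul_one]
  have tBt : (CI' * (B'ᵀ * J')).trace = B'.trace := by
    rw [Matrix.trace_mul_comm, Matrix.mul_assoc, h2, Matrix.mul_one, Matrix.trace_transpose]
  have t1 : (CR' * (D' * (CI' * J'))).trace = (CR' * D').trace := by rw [h1, Matrix.mul_one]
  have t2 : (CI' * (D' * (CR' * J'))).trace = (CR' * D').trace := by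
    rw [Matrix.trace_mul_comm, Matrix.mul_assoc, Matrix.mul_assoc, h2, Matrix.mul_one,
      Matrix.trace_mul_comm]
  have t3 : (CI' * (D' * (CI' * J'))).trace = (D' * CI').trace := by
    rw [h1, Matrix.mul_one, Matrix.trace_mul_comm]
  have t4 : (CR' * (B'ᵀ * J')).trace = (B'ᵀ * (J' * CR')).trace := by
    rw [Matrix.trace_mul_comm, Matrix.mul_assoc]
  have t5 : (CR' * (D' * (CR' * J'))).trace = (D' * (CR' * (J' * CR'))).trace := by
    rw [Matrix.trace_mul_comm, Matrix.mul_assoc, Matrix.mul_assoc]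
  rw [tB, tBt, t1, t2, t3, t4, t5]
  simp only [smul_eq_mul]
  linear_combination (D' * CI').trace * Complex.I_sq
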